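/- Let {G_n} be a positive linear recurrence sequence and let H_n be the number of super-legal decompositions using only G_1, ..., G_n. Then H_{n+1} − H_n equals the number of super-legal decompositions whose largest element is G_{n+1} (i.e., super-legal coefficient tuples (a_1, ..., a_{n+1}) with a_1 ≥ 1), and this number equals Σ_{j=1}^{L} c_j H_{n+1−j} − H_n. -/
import Mathlib


open Finset Filter Asymptotics

open scoped Classical

/-- Super-legal coefficient tuples `(a 1, ..., a n)` with respect to the coefficients
`c 1, ..., c L` of a positive linear recurrence: there is `s ∈ {1, ..., L}` with
`a 1 = c 1, ..., a (s-1) = c (s-1)`, `a s < c s`, followed by `z ≥ 0` zeros, and the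
remaining coefficients are either empty (`lastBlock`) or again super-legal (`consBlock`). -/
inductive IsSuperLegal (L : ℕ) (c : ℕ → ℕ) : List ℕ → Prop
  | lastBlock (s : ℕ) (h1 : 1 ≤ s) (h2 : s ≤ L) (b : ℕ) (hb : b < c s) (z : ℕ) :
      IsSuperLegal L c ((List.range' 1 (s - 1)).map c ++ b :: List.replicate z 0)
  | consBlock (s : ℕ) (h1 : 1 ≤ s) (h2 : s ≤ L) (b : ℕ) (hb : b < c s) (z : ℕ)
      (rest : List ℕ) (hrest : IsSuperLegal L c rest) :
      IsSuperLegal L c ((List.range' 1 (s - 1)).map c ++ b :: (List.replicate z 0 ++ rest))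

lemma isSuperLegal_bound {L : ℕ} {c : ℕ → ℕ} {q : List ℕ} (hq : IsSuperLegal L c q) :
    ∀ x ∈ q, x ≤ (Finset.Icc 1 L).sup c := by
  induction hq with
  | lastBlock s h1 h2 b hb z =>
      intro x hx
      simp only [List.mem_append, List.mem_cons, List.mem_map, List.mem_range'_1,
        List.mem_replicate] at hx
      rcases hx with ⟨i, ⟨hi1, hi2⟩, rfl⟩ | rfl | ⟨_, rfl⟩
      · exact Finset.le_sup (Finset.mem_Icc.mpr ⟨hi1, by omega⟩)
      · exact le_trans hb.le (Finset.le_sup (Finset.mem_Icc.mpr ⟨h1, h2⟩))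
      · exact Nat.zero_le _
  | consBlock s h1 h2 b hb z rest hrest ih =>
      intro x hx
      simp only [List.mem_append, List.mem_cons, List.mem_map, List.mem_range'_1,
        List.mem_replicate] at hx
      rcases hx with ⟨i, ⟨hi1, hi2⟩, rfl⟩ | rfl | ⟨_, rfl⟩ | hx
      · exact Finset.le_sup (Finset.mem_Icc.mpr ⟨hi1, by omega⟩)
      · exact le_trans hb.le (Finset.le_sup (Finset.mem_Icc.mpr ⟨h1, h2⟩))
      · exact Nat.zero_le _
      · exact ih x hx

lemma finite_superLegal_set (L : ℕ) (c : ℕ → ℕ) (n : ℕ) :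
    {q : List ℕ | q.length = n ∧ IsSuperLegal L c q}.Finite := by
  set B := (Finset.Icc 1 L).sup c with hB
  apply Set.Finite.subset
    (Set.Finite.image (List.map (Fin.val : Fin (B + 1) → ℕ)) (List.finite_length_eq _ n))
  rintro q ⟨hlen, hsl⟩
  refine ⟨q.pmap (fun x hx => (⟨x, Nat.lt_succ_of_le hx⟩ : Fin (B + 1)))
      (isSuperLegal_bound hsl), ?_, ?_⟩
  · simpa using hlen
  · simp [List.map_pmap]

instance finite_superLegal (L : ℕ) (c : ℕ → ℕ) (n : ℕ) :
    Finite {q : List ℕ // q.length = n ∧ IsSuperLegal L c q} :=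
  Set.Finite.to_subtype (finite_superLegal_set L c n)

lemma sl_replicate {L : ℕ} {c : ℕ → ℕ} (hL : 1 ≤ L) (hc1 : 1 ≤ c 1) {z : ℕ} (hz : 1 ≤ z) :
    IsSuperLegal L c (List.replicate z 0) := by
  obtain ⟨k, rfl⟩ : ∃ k, z = k + 1 := ⟨z - 1, by omega⟩
  simpa [List.replicate_succ] using IsSuperLegal.lastBlock (L := L) (c := c) 1 le_rfl hL 0 hc1 k

lemma sl_zeros_append {L : ℕ} {c : ℕ → ℕ} (hL : 1 ≤ L) (hc1 : 1 ≤ c 1) {z : ℕ} {rest : List ℕ}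
    (hr : IsSuperLegal L c rest) : IsSuperLegal L c (List.replicate z 0 ++ rest) := by
  cases z with
  | zero => simpa using hr
  | succ k =>
      simpa [List.replicate_succ] using
        IsSuperLegal.consBlock (L := L) (c := c) 1 le_rfl hL 0 hc1 k rest hr

lemma sl_of_cons_zero {L : ℕ} {c : ℕ → ℕ} (hL : 1 ≤ L) (hc1 : 1 ≤ c 1) {q : List ℕ}
    (hq : 1 ≤ q.length) (h : IsSuperLegal L c (0 :: q)) : IsSuperLegal L c q := by
  generalize hw : (0 : ℕ) :: q = w at h
  cases h with
  | lastBlock s h1 h2 b hb z =>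
      obtain ⟨t, rfl⟩ : ∃ t, s = t + 1 := ⟨s - 1, by omega⟩
      cases t with
      | zero =>
          simp only [Nat.add_sub_cancel, List.range'_zero, List.map_nil, List.nil_append,
            List.cons.injEq] at hw
          obtain ⟨rfl, rfl⟩ := hw
          exact sl_replicate hL hc1 (by simpa using hq)
      | succ k =>
          rw [Nat.add_sub_cancel, List.range'_succ] at hw
          simp only [List.map_cons, List.cons_append, List.cons.injEq] at hw
          omega
  | consBlock s h1 h2 b hb z rest hrest =>
      obtain ⟨t, rfl⟩ : ∃ t, s = t + 1 := ⟨s - 1, by omega⟩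
      cases t with
      | zero =>
          simp only [Nat.add_sub_cancel, List.range'_zero, List.map_nil, List.nil_append,
            List.cons.injEq] at hw
          obtain ⟨-, rfl⟩ := hw
          exact sl_zeros_append hL hc1 hrest
      | succ k =>
          rw [Nat.add_sub_cancel, List.range'_succ] at hw
          simp only [List.map_cons, List.cons_append, List.cons.injEq] at hw
          omega

lemma block_le {c : ℕ → ℕ} {a a' e e' : ℕ} {t t' : List ℕ} (ha : 1 ≤ a) (he : e < c a)
    (heq : (List.range' 1 (a - 1)).map c ++ e :: t =
      (List.range' 1 (a' - 1)).map c ++ e' :: t') : a' ≤ a := by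
  by_contra hlt
  push_neg at hlt
  have hlen1 : a - 1 < ((List.range' 1 (a - 1)).map c ++ e :: t).length := by simp
  have hv1 : ((List.range' 1 (a - 1)).map c ++ e :: t)[a - 1]'hlen1 = e := by
    rw [List.getElem_append_right (by simp)]
    simp
  have hlen2 : a - 1 < ((List.range' 1 (a' - 1)).map c ++ e' :: t').length := by
    simp; omega
  have hv2 : ((List.range' 1 (a' - 1)).map c ++ e' :: t')[a - 1]'hlen2 = c a := by
    rw [List.getElem_append_left (by simp; omega)]
    simp only [List.getElem_map, List.getElem_range']
    congr 1
    omega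
  exact absurd (hv1.symm.trans ((List.getElem_of_eq heq hlen1).trans hv2)) (by omega)

lemma block_inj {c : ℕ → ℕ} {j j' b b' : ℕ} (hj1 : 1 ≤ j) (hj'1 : 1 ≤ j')
    (hb : b < c j) (hb' : b' < c j') {r r' : List ℕ}
    (h : (List.range' 1 (j - 1)).map c ++ b :: r =
      (List.range' 1 (j' - 1)).map c ++ b' :: r') :
    j = j' ∧ b = b' ∧ r = r' := by
  have hjj : j = j' := le_antisymm (block_le hj'1 hb' h.symm) (block_le hj1 hb h)
  subst hjj
  have h2 := List.append_cancel_left h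
  simp only [List.cons.injEq] at h2
  exact ⟨rfl, h2.1, h2.2⟩

/-- `numSuperLegal L c n` is `H n`, the number of super-legal coefficient tuples
`(a 1, ..., a n)`, i.e., the number of super-legal decompositions using only
`G 1, ..., G n`. -/
noncomputable def numSuperLegal (L : ℕ) (c : ℕ → ℕ) (n : ℕ) : ℕ :=
  Nat.card {q : List ℕ // q.length = n ∧ IsSuperLegal L c q}

lemma nat_card_sigma {ι : Type*} [Fintype ι] (f : ι → Type*) [∀ i, Finite (f i)] :
    Nat.card (Σ i, f i) = ∑ i, Nat.card (f i) := by
  letI : ∀ i, Fintype (f i) := fun i => Fintype.ofFinite _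
  simp [Nat.card_eq_fintype_card, Fintype.card_sigma]

lemma card_recurrence {L : ℕ} {c : ℕ → ℕ} (hL : 1 ≤ L) (hc1 : 1 ≤ c 1) {n : ℕ} (hn : L ≤ n) :
    numSuperLegal L c (n + 1) = ∑ j ∈ Finset.Icc 1 L, c j * numSuperLegal L c (n + 1 - j) := by
  classical
  let f : (Σ j : ↥(Finset.Icc 1 L), Fin (c j) ×
      {q : List ℕ // q.length = n + 1 - (j : ℕ) ∧ IsSuperLegal L c q}) →
      {q : List ℕ // q.length = n + 1 ∧ IsSuperLegal L c q} := fun x =>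
    ⟨(List.range' 1 ((x.1 : ℕ) - 1)).map c ++ (x.2.1 : ℕ) :: (x.2.2 : List ℕ),
      by
        have hj := Finset.mem_Icc.mp x.1.2
        have hr := x.2.2.2.1
        simp [hr]
        omega,
      by
        have hj := Finset.mem_Icc.mp x.1.2
        simpa using IsSuperLegal.consBlock (x.1 : ℕ) hj.1 hj.2 (x.2.1 : ℕ) x.2.1.isLt 0
          (x.2.2 : List ℕ) x.2.2.2.2⟩
  have hbij : Function.Bijective f := by
    constructor
    · rintro ⟨⟨j, hj⟩, b, ⟨r, hr, hsr⟩⟩ ⟨⟨j', hj'⟩, b', ⟨r', hr', hsr'⟩⟩ heq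
      have hjm := Finset.mem_Icc.mp hj
      have hjm' := Finset.mem_Icc.mp hj'
      simp only [f, Subtype.mk.injEq] at heq
      obtain ⟨rfl, hbb, rfl⟩ := block_inj hjm.1 hjm'.1 b.isLt b'.isLt heq
      have : b = b' := Fin.ext hbb
      subst this
      rfl
    · rintro ⟨q, hlen, hsl⟩
      cases hsl with
      | lastBlock s h1 h2 b hb z =>
          have hlen' : s - 1 + (z + 1) = n + 1 := by simpa using hlen
          refine ⟨⟨⟨s, Finset.mem_Icc.mpr ⟨h1, h2⟩⟩, ⟨b, hb⟩,
            ⟨List.replicate z 0, by simp; omega, sl_replicate hL hc1 (by omega)⟩⟩, rfl⟩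
      | consBlock s h1 h2 b hb z rest hrest =>
          have hlen' : s - 1 + (1 + (z + rest.length)) = n + 1 := by
            simpa [add_comm, add_assoc, add_left_comm] using hlen
          refine ⟨⟨⟨s, Finset.mem_Icc.mpr ⟨h1, h2⟩⟩, ⟨b, hb⟩,
            ⟨List.replicate z 0 ++ rest, by simp; omega,
              sl_zeros_append hL hc1 hrest⟩⟩, rfl⟩
  have := Nat.card_eq_of_bijective f hbij
  rw [numSuperLegal, ← this, nat_card_sigma]
  rw [← Finset.sum_coe_sort (Finset.Icc 1 L)
    (fun j => c j * numSuperLegal L c (n + 1 - j))]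
  congr 1
  funext j
  simp [Nat.card_prod, Nat.card_eq_fintype_card, numSuperLegal]

lemma card_head_split {L : ℕ} {c : ℕ → ℕ} (hL : 1 ≤ L) (hc1 : 1 ≤ c 1) {n : ℕ} (hn : 1 ≤ n) :
    numSuperLegal L c (n + 1) = numSuperLegal L c n +
      Nat.card {q : List ℕ // q.length = n + 1 ∧ IsSuperLegal L c q ∧ 1 ≤ q.headI} := by
  classical
  have h0 : Nat.card {q : List ℕ // q.length = n + 1 ∧ IsSuperLegal L c q ∧ q.headI = 0} =
      numSuperLegal L c n := by
    symm
    apply Nat.card_eq_of_bijective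
      (f := fun (x : {q : List ℕ // q.length = n ∧ IsSuperLegal L c q}) =>
        (⟨0 :: x.1, by simp [x.2.1],
          by simpa using IsSuperLegal.consBlock (L := L) (c := c) 1 le_rfl hL 0 hc1 0 x.1 x.2.2,
          rfl⟩ : {q : List ℕ // q.length = n + 1 ∧ IsSuperLegal L c q ∧ q.headI = 0}))
    constructor
    · rintro ⟨q, hq⟩ ⟨q', hq'⟩ heq
      simp only [Subtype.mk.injEq, List.cons.injEq] at heq
      exact Subtype.ext heq.2
    · rintro ⟨q, hlen, hsl, hhead⟩
      cases q with
      | nil => simp at hlen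
      | cons a t =>
          simp only [List.headI] at hhead
          subst hhead
          have ht : t.length = n := by simpa using hlen
          exact ⟨⟨t, ht, sl_of_cons_zero hL hc1 (by omega) hsl⟩, rfl⟩
  have e1 : {q : List ℕ | q.length = n + 1 ∧ IsSuperLegal L c q} =
      {q : List ℕ | q.length = n + 1 ∧ IsSuperLegal L c q ∧ q.headI = 0} ∪
      {q : List ℕ | q.length = n + 1 ∧ IsSuperLegal L c q ∧ 1 ≤ q.headI} := by
    ext q
    constructor
    · rintro ⟨h1, h2⟩
      rcases Nat.eq_zero_or_pos q.headI with h | h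
      · exact Or.inl ⟨h1, h2, h⟩
      · exact Or.inr ⟨h1, h2, h⟩
    · rintro (⟨h1, h2, -⟩ | ⟨h1, h2, -⟩) <;> exact ⟨h1, h2⟩
  have hd : Disjoint {q : List ℕ | q.length = n + 1 ∧ IsSuperLegal L c q ∧ q.headI = 0}
      {q : List ℕ | q.length = n + 1 ∧ IsSuperLegal L c q ∧ 1 ≤ q.headI} := by
    rw [Set.disjoint_left]
    rintro q ⟨-, -, h0'⟩ ⟨-, -, h1'⟩
    omega
  have hf0 : {q : List ℕ | q.length = n + 1 ∧ IsSuperLegal L c q ∧ q.headI = 0}.Finite :=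
    (finite_superLegal_set L c (n + 1)).subset (by rintro q ⟨h1, h2, -⟩; exact ⟨h1, h2⟩)
  have hf1 : {q : List ℕ | q.length = n + 1 ∧ IsSuperLegal L c q ∧ 1 ≤ q.headI}.Finite :=
    (finite_superLegal_set L c (n + 1)).subset (by rintro q ⟨h1, h2, -⟩; exact ⟨h1, h2⟩)
  calc numSuperLegal L c (n + 1)
      = {q : List ℕ | q.length = n + 1 ∧ IsSuperLegal L c q}.ncard :=
        Nat.card_coe_set_eq _
    _ = ({q : List ℕ | q.length = n + 1 ∧ IsSuperLegal L c q ∧ q.headI = 0} ∪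
        {q : List ℕ | q.length = n + 1 ∧ IsSuperLegal L c q ∧ 1 ≤ q.headI}).ncard := by
        rw [e1]
    _ = {q : List ℕ | q.length = n + 1 ∧ IsSuperLegal L c q ∧ q.headI = 0}.ncard +
        {q : List ℕ | q.length = n + 1 ∧ IsSuperLegal L c q ∧ 1 ≤ q.headI}.ncard :=
        Set.ncard_union_eq hd hf0 hf1
    _ = numSuperLegal L c n +
        Nat.card {q : List ℕ // q.length = n + 1 ∧ IsSuperLegal L c q ∧ 1 ≤ q.headI} := by
        exact congrArg₂ HAdd.hAdd h0 rfl

theorem numSuperLegal_succ_sub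
    (L : ℕ) (c G : ℕ → ℕ)
    (hL : 1 ≤ L) (hc1 : 1 ≤ c 1) (hcL : 1 ≤ c L)
    (hGpos : ∀ i, 1 ≤ i → 1 ≤ G i)
    (hGrec : ∀ n, L ≤ n → G (n + 1) = ∑ i ∈ Finset.Icc 1 L, c i * G (n + 1 - i))
 :
    ∀ n, L ≤ n →
      (numSuperLegal L c (n + 1) : ℤ) - numSuperLegal L c n =
        Nat.card {q : List ℕ // q.length = n + 1 ∧ IsSuperLegal L c q ∧ 1 ≤ q.headI} ∧
      (Nat.card {q : List ℕ // q.length = n + 1 ∧ IsSuperLegal L c q ∧ 1 ≤ q.headI} : ℤ) =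
        ∑ j ∈ Finset.Icc 1 L, (c j : ℤ) * numSuperLegal L c (n + 1 - j) -
          numSuperLegal L c n := by
  intro n hn
  have hn1 : 1 ≤ n := le_trans hL hn
  have hsplit := card_head_split hL hc1 hn1
  have hrec := card_recurrence hL hc1 hn
  constructor
  · rw [hsplit]
    push_cast
    ring
  · have h1 : (Nat.card {q : List ℕ // q.length = n + 1 ∧ IsSuperLegal L c q ∧ 1 ≤ q.headI} : ℤ)
        = (numSuperLegal L c (n + 1) : ℤ) - numSuperLegal L c n := by
      rw [hsplit]; push_cast; ring
    rw [h1, hrec]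
    push_cast
    ring
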